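/- arXiv:1409.0034 — 2 statements merged into one kernel-verified Lean document; each statement's English description precedes it below -/
import Mathlib

section
/- For any k-edge-connected multigraph G with k ∈ {2,3} and any destination vertex d, any circular-arborescence routing (i.e., one built from any set of k pairwise arc-disjoint d-rooted spanning arborescences with any circular order and any per-source choice of initial arborescence) is (k−1)-resilient; moreover, during the delivery of any packet the number of switches between arborescences is at most 4. -/
open scoped Classical

namespace Srr

/-- A multigraph on vertex type `V` with edge-name type `E`: every edge name is
assigned its (unordered) pair of endpoints; parallel edges are allowed. -/
structure Multigraph (V E : Type) where
  ends : E → Sym2 V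

namespace Multigraph

variable {V E : Type}

/-- Walks in a multigraph. -/
inductive Walk (G : Multigraph V E) : V → V → Type
  | nil (v : V) : Walk G v v
  | cons {u v w : V} (e : E) (h : G.ends e = s(u, v)) (p : Walk G v w) : Walk G u w

namespace Walk

/-- The edges of a walk, in order. -/
def edges {G : Multigraph V E} : ∀ {u v : V}, G.Walk u v → List E
  | _, _, nil _ => []
  | _, _, cons e _ p => e :: edges p

/-- The vertices visited by a walk, in order. -/
def support {G : Multigraph V E} : ∀ {u v : V}, G.Walk u v → List V
  | _, _, nil v => [v]
  | u, _, cons _ _ p => u :: support p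

/-- A walk is a path if it visits no vertex twice. -/
def IsPath {G : Multigraph V E} {u v : V} (p : G.Walk u v) : Prop :=
  p.support.Nodup

end Walk

/-- `G` is `k`-edge-connected: between every pair of distinct vertices there
exist `k` pairwise edge-disjoint paths. -/
def EdgeConnected (G : Multigraph V E) (k : ℕ) : Prop :=
  ∀ u v : V, u ≠ v → ∃ P : Fin k → G.Walk u v,
    (∀ i, (P i).IsPath) ∧
    ∀ i j : Fin k, i ≠ j → ∀ e : E, e ∈ (P i).edges → e ∉ (P j).edges

/-- `s` is still connected to `d` after the edges of `F` have failed. -/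
def ConnAvoiding (G : Multigraph V E) (F : Finset E) (s d : V) : Prop :=
  ∃ p : G.Walk s d, ∀ e ∈ p.edges, e ∉ F

/-- The active (non-failed) edges incident to `v`, given the failed set `F`. -/
noncomputable def activeAt [Fintype E] (G : Multigraph V E) (F : Finset E) (v : V) :
    Finset E :=
  Finset.univ.filter (fun e => v ∈ G.ends e ∧ e ∉ F)

end Multigraph

/-- A static deterministic destination-based set of routing functions: for each
vertex, a map from (incoming edge, `none` if the packet originates there;
set of active incident edges) to a chosen outgoing edge. -/
def Routing (V E : Type) : Type := V → Option E → Finset E → E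

/-- Header-rewriting routing functions with a 3-bit (8-valued) header. -/
def HRouting (V E : Type) : Type := V → Option E → Finset E → Fin 8 → E × Fin 8

/-- Duplication routing functions: the output is the set of edges along which
copies of the packet are sent. -/
def DRouting (V E : Type) : Type := V → Option E → Finset E → Finset E

/-- `σ` (the "next" map) describes a circular order on `Fin k`: iterating `σ`
from any index visits every index. -/
def IsCircularOrder {k : ℕ} (σ : Fin k → Fin k) : Prop :=
  ∀ i j : Fin k, ∃ m : ℕ, σ^[m] i = j

/-- Whether the second component (the arborescence in use) changes between
times `m` and `m+1` of a run. -/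
noncomputable def switchAt {α β : Type} (run : ℕ → Option (α × β)) (m : ℕ) : Bool :=
  match run m, run (m + 1) with
  | some p, some q => decide (p.2 ≠ q.2)
  | _, _ => false

/-- The number of switches of the second component during the first `n` steps
of a run. -/
noncomputable def switchCount {α β : Type} (run : ℕ → Option (α × β)) (n : ℕ) : ℕ :=
  ((List.range n).filter (fun m => switchAt run m)).length

namespace Multigraph

variable {V E : Type} [Fintype V] [Fintype E]

/-- One forwarding step of a packet under routing `f` and failed edge set `F`;
a state is (current vertex, incoming edge or `none`). The step is only
possible when the chosen edge is incident to the current vertex and has not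
failed. -/
def RStep (G : Multigraph V E) (f : Routing V E) (F : Finset E)
    (p q : V × Option E) : Prop :=
  ∃ w : V,
    f p.1 p.2 (G.activeAt F p.1) ∉ F ∧
    G.ends (f p.1 p.2 (G.activeAt F p.1)) = s(p.1, w) ∧
    q = (w, some (f p.1 p.2 (G.activeAt F p.1)))

/-- Under failed edges `F`, a packet originated at `s` reaches `d` in finitely
many steps. -/
def Delivers (G : Multigraph V E) (f : Routing V E) (F : Finset E) (d s : V) : Prop :=
  ∃ i : Option E, Relation.ReflTransGen (G.RStep f F) (s, none) (d, i)

/-- `f` is a `k`-resilient routing towards destination `d`. -/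
def Resilient (G : Multigraph V E) (f : Routing V E) (d : V) (k : ℕ) : Prop :=
  ∀ F : Finset E, F.card ≤ k → ∀ s : V, G.ConnAvoiding F s d → G.Delivers f F d s

/-- A `d`-rooted spanning arborescence of the directed copy of `G`: every
vertex `v ≠ d` has exactly one outgoing arc, which goes along the edge
`edge v` towards `parent v`; `d` has no outgoing arc; following `parent`
from any vertex reaches `d` (hence every vertex has a unique directed path
to `d` in the arborescence). -/
structure Arborescence (G : Multigraph V E) (d : V) where
  parent : V → V
  edge : V → E
  parent_root : parent d = d
  ends_eq : ∀ v : V, v ≠ d → G.ends (edge v) = s(v, parent v)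
  reaches_root : ∀ v : V, ∃ n : ℕ, parent^[n] v = d

namespace Arborescence

/-- Two arborescences are arc-disjoint: no directed arc (identified by its
tail vertex together with the underlying edge) lies in both. -/
def ArcDisjoint {G : Multigraph V E} {d : V} (T₁ T₂ : G.Arborescence d) : Prop :=
  ∀ v : V, v ≠ d → T₁.edge v ≠ T₂.edge v

/-- `T₁` and `T₂` share an edge `{v,w}` of `G` if the arc `(v,w)` is in `T₁`
and the reversed arc `(w,v)` (of the same underlying edge) is in `T₂`. -/
def SharesEdge {G : Multigraph V E} {d : V} (T₁ T₂ : G.Arborescence d) : Prop :=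
  ∃ v w : V, v ≠ d ∧ w ≠ d ∧
    T₁.parent v = w ∧ T₂.parent w = v ∧ T₁.edge v = T₂.edge w

/-- The unique directed path in `T` from `u` to `d` contains no failed edge. -/
def GoodFrom {G : Multigraph V E} {d : V} (T : G.Arborescence d)
    (F : Finset E) (u : V) : Prop :=
  ∀ n : ℕ, T.parent^[n] u ≠ d → T.edge (T.parent^[n] u) ∉ F

end Arborescence

/-- The next arborescence used at vertex `v` when the current one is `i`: the
first arborescence in the circular order (starting with `i` itself) whose
outgoing edge at `v` has not failed, if any. -/
noncomputable def nextIdx (G : Multigraph V E) {k : ℕ} {d : V}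
    (T : Fin k → G.Arborescence d) (σ : Fin k → Fin k) (F : Finset E)
    (v : V) (i : Fin k) : Option (Fin k) :=
  ((List.range k).map (fun m => σ^[m] i)).find? (fun j => decide ((T j).edge v ∉ F))

/-- One step of circular-arborescence routing; a state is
(current vertex, current arborescence). -/
noncomputable def caStep (G : Multigraph V E) {k : ℕ} {d : V}
    (T : Fin k → G.Arborescence d) (σ : Fin k → Fin k) (F : Finset E)
    (p : V × Fin k) : Option (V × Fin k) :=
  if p.1 = d then none
  else (G.nextIdx T σ F p.1 p.2).map (fun j => ((T j).parent p.1, j))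

/-- The trajectory of a packet under circular-arborescence routing, starting
at `s` on arborescence `i₀`. -/
noncomputable def caRun (G : Multigraph V E) {k : ℕ} {d : V}
    (T : Fin k → G.Arborescence d) (σ : Fin k → Fin k) (F : Finset E)
    (s : V) (i₀ : Fin k) : ℕ → Option (V × Fin k)
  | 0 => some (s, i₀)
  | n + 1 => (G.caRun T σ F s i₀ n).bind (G.caStep T σ F)

/-- One step of the two-phase routing `R` built from `m+1` arborescences:
in state `(v, none)` the packet is routed canonically along the last
arborescence `T (Fin.last m)`; when it hits a failed edge `{x,y}` there, it
switches to the circular-arborescence routing on the first `m` arborescences,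
starting from the one containing the reversed arc `(y,x)`; states `(v, some i)`
perform this circular routing. -/
noncomputable def rStep2 (G : Multigraph V E) {m : ℕ} {d : V}
    (T : Fin (m + 1) → G.Arborescence d) (σ : Fin m → Fin m) (F : Finset E)
    (p : V × Option (Fin m)) : Option (V × Option (Fin m)) :=
  if p.1 = d then none
  else
    match p.2 with
    | none =>
        if (T (Fin.last m)).edge p.1 ∈ F then
          ((List.finRange m).find? (fun j =>
              decide ((T j.castSucc).edge ((T (Fin.last m)).parent p.1) =
                  (T (Fin.last m)).edge p.1 ∧
                (T j.castSucc).parent ((T (Fin.last m)).parent p.1) = p.1))).map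
            (fun j => (p.1, some j))
        else some ((T (Fin.last m)).parent p.1, none)
    | some i =>
        (G.nextIdx (fun j => T j.castSucc) σ F p.1 i).map
          (fun j => ((T j.castSucc).parent p.1, some j))

/-- The trajectory of a packet under the two-phase routing `R`. -/
noncomputable def rRun2 (G : Multigraph V E) {m : ℕ} {d : V}
    (T : Fin (m + 1) → G.Arborescence d) (σ : Fin m → Fin m) (F : Finset E)
    (s : V) : ℕ → Option (V × Option (Fin m))
  | 0 => some (s, none)
  | n + 1 => (G.rRun2 T σ F s n).bind (G.rStep2 T σ F)

/-- `π` is a circular ordering of the edges incident to `v`. -/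
def IsCircAt (G : Multigraph V E) (v : V) (π : E → E) : Prop :=
  (∀ e : E, v ∈ G.ends e → v ∈ G.ends (π e)) ∧
  (∀ e : E, ¬ v ∈ G.ends e → π e = e) ∧
  (∀ e e' : E, v ∈ G.ends e → v ∈ G.ends e' → ∃ m : ℕ, π^[m] e = e')

/-- The first non-failed edge strictly after `e` in the circular order `π`
among the active edges `A`. -/
noncomputable def nextCirc (π : E → E) (e : E) (A : Finset E) : Option E :=
  ((List.range (Fintype.card E)).map (fun m => π^[m + 1] e)).find?
    (fun e' => decide (e' ∈ A))

/-- A routing is vertex-circular: every vertex has a circular ordering of its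
incident edges, and a packet received along `e` is forwarded through the next
non-failed edge after `e` in this circular order. -/
def IsVertexCircular (G : Multigraph V E) (f : Routing V E) : Prop :=
  ∀ v : V, ∃ π : E → E, G.IsCircAt v π ∧
    ∀ e : E, v ∈ G.ends e → ∀ A : Finset E, ∀ r : E,
      nextCirc π e A = some r → f v (some e) A = r

/-- A routing is vertex-connectivity-resilient: every packet originated at a
vertex having `k` pairwise edge-disjoint paths to `d` reaches `d` whenever
fewer than `k` edges fail. -/
def VertexConnResilient (G : Multigraph V E) (d : V) (f : Routing V E) : Prop :=
  ∀ v : V, ∀ k : ℕ,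
    (∃ P : Fin k → G.Walk v d, (∀ i, (P i).IsPath) ∧
      ∀ i j : Fin k, i ≠ j → ∀ e : E, e ∈ (P i).edges → e ∉ (P j).edges) →
    ∀ F : Finset E, F.card < k → G.Delivers f F d v

/-- One step of header-rewriting routing; a state is
(current vertex, incoming edge, current 3-bit header). -/
def HStep (G : Multigraph V E) (f : HRouting V E) (F : Finset E)
    (p q : V × Option E × Fin 8) : Prop :=
  ∃ w : V,
    (f p.1 p.2.1 (G.activeAt F p.1) p.2.2).1 ∉ F ∧
    G.ends (f p.1 p.2.1 (G.activeAt F p.1) p.2.2).1 = s(p.1, w) ∧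
    q = (w, some (f p.1 p.2.1 (G.activeAt F p.1) p.2.2).1,
         (f p.1 p.2.1 (G.activeAt F p.1) p.2.2).2)

/-- The endpoint of `e` other than `v` (an arbitrary vertex if `e` is not
incident to `v`; `v` itself if `e` is a loop at `v`). -/
noncomputable def otherEnd (G : Multigraph V E) (v : V) (e : E) : V :=
  if h : ∃ w : V, G.ends e = s(v, w) then h.choose else v

/-- The copies produced from packet state `p` in one step of duplication
routing: one copy along each chosen non-failed incident edge; no copies once
the packet is at `d`. -/
noncomputable def dchildren (G : Multigraph V E) (f : DRouting V E) (F : Finset E)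
    (d : V) (p : V × Option E) : Multiset (V × Option E) :=
  if p.1 = d then 0
  else ((f p.1 p.2 (G.activeAt F p.1) ∩ G.activeAt F p.1).val.map
      (fun e => (G.otherEnd p.1 e, some e)))

/-- The multiset of packet-copy states after `n` steps of duplication routing
of a packet originated at `s`. -/
noncomputable def dlevel (G : Multigraph V E) (f : DRouting V E) (F : Finset E)
    (d : V) (s : V) : ℕ → Multiset (V × Option E)
  | 0 => {(s, none)}
  | n + 1 => (G.dlevel f F d s n).bind (G.dchildren f F d)

/-- The total number of new copies of the packet created during the first `N`
steps of duplication routing. -/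
noncomputable def dcreated (G : Multigraph V E) (f : DRouting V E) (F : Finset E)
    (d : V) (s : V) (N : ℕ) : ℕ :=
  ∑ n ∈ Finset.range N,
    ((G.dlevel f F d s n).map (fun p => (G.dchildren f F d p).card - 1)).sum

/-- Two vertices are joined by a walk in the multigraph. -/
def Reach (G : Multigraph V E) : V → V → Prop :=
  Relation.ReflTransGen (fun u v => ∃ e : E, G.ends e = s(u, v))

/-- The connected component of `v`. -/
noncomputable def compOf (G : Multigraph V E) (v : V) : Finset V :=
  Finset.univ.filter (fun w => G.Reach v w)

/-- The edges with all endpoints inside `S`. -/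
noncomputable def edgesIn (G : Multigraph V E) (S : Finset V) : Finset E :=
  Finset.univ.filter (fun e => ∀ x ∈ G.ends e, x ∈ S)

/-- A set of vertices forms a tree component: it is connected, carries no
self-loop, and the number of its edges is its number of vertices minus one. -/
def IsTreeComp (G : Multigraph V E) (S : Finset V) : Prop :=
  (∀ u ∈ S, ∀ w ∈ S, G.Reach u w) ∧
  (∀ e ∈ G.edgesIn S, ¬ (G.ends e).IsDiag) ∧
  (G.edgesIn S).card = S.card - 1

end Multigraph

/-- The multigraph associated with a simple graph: the edge names are the
edges of the simple graph. -/
def toMG {W : Type} (G : SimpleGraph W) : Multigraph W G.edgeSet :=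
  ⟨fun e => (e : Sym2 W)⟩

/-- A simple graph is planar: it has an embedding in the plane. Vertices are
mapped to distinct points, every edge to a simple continuous arc between the
images of its endpoints, arcs pass through no other vertex, and two distinct
arcs may only meet at images of vertices (hence only at shared endpoints). -/
def IsPlanar {W : Type} (G : SimpleGraph W) : Prop :=
  ∃ (p : W → ℝ × ℝ) (arc : W → W → Set (ℝ × ℝ)),
    Function.Injective p ∧
    (∀ u v : W, arc u v = arc v u) ∧
    (∀ u v : W, G.Adj u v → ∃ γ : ℝ → ℝ × ℝ,
      ContinuousOn γ (Set.Icc 0 1) ∧ Set.InjOn γ (Set.Icc 0 1) ∧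
      γ 0 = p u ∧ γ 1 = p v ∧ arc u v = γ '' Set.Icc 0 1) ∧
    (∀ u v w : W, G.Adj u v → p w ∈ arc u v → w = u ∨ w = v) ∧
    (∀ u v x y : W, G.Adj u v → G.Adj x y → s(u, v) ≠ s(x, y) →
      arc u v ∩ arc x y ⊆ Set.range p)

end Srr

/-!
Call a state `(v, i)` of the routing bad if the arc of `T i` leaving `v` has failed. The packet
switches only at bad states, and between two consecutive bad states `x`, `y` it leaves `x.1` on
the next usable arborescence `y.2` and follows it to `y.1`. Hence `x.1` is not an endpoint of the
failed edge at `y`, so consecutive bad states carry different failed edges; with `k = 2` and one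
failure a packet therefore never meets a second bad state, and cannot loop.

For `k = 3` and at most two failures the same observation shows that the packet always switches
from `i` to `σ i`: the arc of `σ i` at `x.1` could only fail along the edge of `x`, which `T i`
already uses there. So along a loop the failed edges alternate `e, e', e, …` while the
arborescences advance by `σ`, of period `3`; the first, third and fifth bad states would be three
distinct bad states on `e`, but arc-disjointness allows at most one per endpoint.

For the switch bound: a delivered packet visits no state twice, since the routing is
deterministic, and it switches only at bad states; arc-disjointness leaves at most two bad states
per failed edge, hence at most `2 |F| ≤ 4` in all.
-/

namespace Srr

open Function Multigraph

theorem iterate_injOn_Iio_of_forall_lt {α : Type*} {f : α → α} {x : α} {P : α → Prop} {n : ℕ}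
    (hn : P (f^[n] x)) (hlt : ∀ m < n, ¬ P (f^[m] x)) : Set.InjOn (f^[·] x) (Set.Iio n) := by
  have key : ∀ a b, a < b → b < n → f^[a] x ≠ f^[b] x := by
    intro a b hab hb he
    apply hlt (n - b + a) (by omega)
    rwa [iterate_add_apply, he, ← iterate_add_apply, Nat.sub_add_cancel hb.le]
  intro a ha b hb he
  rcases lt_trichotomy a b with h | h | h
  · exact absurd he (key a b h hb)
  · exact h
  · exact absurd he.symm (key b a h ha)

theorem IsCircularOrder.minimalPeriod_eq {k : ℕ} {σ : Fin k → Fin k} (hσ : IsCircularOrder σ)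
    (i : Fin k) : minimalPeriod σ i = k := by
  have hper : i ∈ periodicPts σ := by
    obtain ⟨m, hm⟩ := hσ (σ i) i
    exact mk_mem_periodicPts m.succ_pos (by rwa [IsPeriodicPt, IsFixedPt, iterate_succ_apply])
  have hpos := minimalPeriod_pos_of_mem_periodicPts hper
  have hsurj : Finset.univ ⊆ (Finset.range (minimalPeriod σ i)).image (σ^[·] i) := by
    intro j _
    obtain ⟨m, rfl⟩ := hσ i j
    exact Finset.mem_image.2
      ⟨m % minimalPeriod σ i, Finset.mem_range.2 (Nat.mod_lt _ hpos), iterate_mod_minimalPeriod_eq⟩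
  refine le_antisymm (by simpa using minimalPeriod_le_card (f := σ) (x := i)) ?_
  calc k = (Finset.univ : Finset (Fin k)).card := by simp
    _ ≤ _ := (Finset.card_le_card hsurj).trans Finset.card_image_le
    _ = _ := Finset.card_range _

theorem IsCircularOrder.iterate_eq_iterate_iff {k : ℕ} {σ : Fin k → Fin k}
    (hσ : IsCircularOrder σ) (i : Fin k) {a b : ℕ} : σ^[a] i = σ^[b] i ↔ a % k = b % k := by
  rw [← iterate_mod_minimalPeriod_eq (n := a), ← iterate_mod_minimalPeriod_eq (n := b),
    hσ.minimalPeriod_eq]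
  have hlt : ∀ n, n % k < minimalPeriod σ i := fun n => by
    rw [hσ.minimalPeriod_eq]
    exact Nat.mod_lt _ i.pos
  exact iterate_eq_iterate_iff_of_lt_minimalPeriod (hlt a) (hlt b)

theorem Finset.eq_or_eq_of_card_le_two {α : Type*} {s : Finset α} {a b c : α}
    (hs : s.card ≤ 2) (ha : a ∈ s) (hb : b ∈ s) (hc : c ∈ s) (hab : a ≠ b) : c = a ∨ c = b := by
  by_contra! h
  have := Finset.two_lt_card_iff.2 ⟨a, b, c, ha, hb, hc, hab, h.1.symm, h.2.symm⟩
  omega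

theorem switchCount_le_card {α β : Type} {run : ℕ → Option (α × β)} {X : ℕ → α × β} {n : ℕ}
    {S : Finset (α × β)} (hrun : ∀ m ≤ n, run m = some (X m)) (hinj : Set.InjOn X (Set.Iio n))
    (hS : ∀ m < n, (X (m + 1)).2 ≠ (X m).2 → X m ∈ S) : switchCount run n ≤ S.card := by
  have hsw : ∀ m < n, switchAt run m = true → X m ∈ S := by
    intro m hm h
    simp only [switchAt, hrun m hm.le, hrun (m + 1) hm, decide_eq_true_eq] at h
    exact hS m hm (Ne.symm h)
  unfold switchCount
  rw [← List.toFinset_card_of_nodup (List.nodup_range.filter _)]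
  refine Finset.card_le_card_of_injOn X (fun m hm => ?_) (hinj.mono fun m hm => ?_)
  all_goals
    obtain ⟨hm, h⟩ := List.mem_filter.1 (List.mem_toFinset.1 hm)
    have hm := List.mem_range.1 hm
  · exact hsw m hm h
  · exact hm

namespace Multigraph

variable {V E : Type} {G : Multigraph V E} {d : V}

namespace Arborescence

variable (T : G.Arborescence d)

theorem iterate_parent_ne_self {v : V} (hv : v ≠ d) {m : ℕ} (hm : 0 < m) :
    T.parent^[m] v ≠ v := by
  intro h
  obtain ⟨n, hn⟩ := T.reaches_root v
  apply hv
  rw [← iterate_fixed h n, ← iterate_mul, ← Nat.sub_add_cancel (Nat.le_mul_of_pos_left n hm),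
    iterate_add_apply, hn, iterate_fixed T.parent_root]

theorem mem_ends_edge {v : V} (hv : v ≠ d) : v ∈ G.ends (T.edge v) := by
  rw [T.ends_eq v hv]
  exact Sym2.mem_mk_left _ _

theorem eq_of_edge_eq {u w : V} (hu : u ≠ d) (hw : w ≠ d) (h : T.edge u = T.edge w) :
    u = w := by
  have hends := T.ends_eq u hu
  rw [h, T.ends_eq w hw, Sym2.eq_iff] at hends
  rcases hends with ⟨hwu, -⟩ | ⟨hwp, hpw⟩
  · exact hwu.symm
  · exact absurd (show T.parent (T.parent w) = w by rw [hpw, hwp])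
      (T.iterate_parent_ne_self hw two_pos)

end Arborescence

variable {k : ℕ} {T : Fin k → G.Arborescence d} {σ : Fin k → Fin k} {F : Finset E}

theorem eq_of_arcDisjoint (hdisj : ∀ i j : Fin k, i ≠ j → (T i).ArcDisjoint (T j)) {v : V}
    (hv : v ≠ d) {i j : Fin k} (h : (T i).edge v = (T j).edge v) : i = j := by
  by_contra hij
  exact hdisj i j hij v hv h

theorem nextIdx_eq_some_self {v : V} {i : Fin k} (h : (T i).edge v ∉ F) :
    G.nextIdx T σ F v i = some i := by
  obtain ⟨k, rfl⟩ := Nat.exists_eq_add_of_lt i.pos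
  simp [nextIdx, List.range_succ_eq_map, h]

theorem edge_notMem_of_nextIdx_eq_some {v : V} {i j : Fin k}
    (h : G.nextIdx T σ F v i = some j) : (T j).edge v ∉ F := by
  simpa using List.find?_some h

theorem nextIdx_eq_some_of_mem {v : V} {i j : Fin k} (hi : (T i).edge v ∈ F)
    (h : G.nextIdx T σ F v i = some j) : j = σ i ∨ (T (σ i)).edge v ∈ F := by
  rcases k with _ | _ | k
  · exact i.elim0
  · simp [nextIdx, hi] at h
  · by_cases hσi : (T (σ i)).edge v ∈ F
    · exact Or.inr hσi
    · simp only [nextIdx, List.range_succ_eq_map, List.map_cons, List.map_map] at h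
      exact Or.inl (by simpa [hi, hσi, eq_comm] using h)

theorem exists_nextIdx_eq_some (hσ : IsCircularOrder σ)
    (hdisj : ∀ i j : Fin k, i ≠ j → (T i).ArcDisjoint (T j)) (hF : F.card < k) {v : V}
    (hv : v ≠ d) (i : Fin k) : ∃ j, G.nextIdx T σ F v i = some j := by
  rw [← Option.isSome_iff_exists, nextIdx, List.find?_isSome]
  by_contra! hall
  have hfail : ∀ j, (T j).edge v ∈ F := by
    intro j
    obtain ⟨m, rfl⟩ := hσ i j
    have hmem : σ^[m % k] i ∈ (List.range k).map (σ^[·] i) :=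
      List.mem_map_of_mem (List.mem_range.2 (Nat.mod_lt _ i.pos))
    simpa [← hσ.minimalPeriod_eq i, iterate_mod_minimalPeriod_eq] using hall _ hmem
  have := Finset.card_le_card_of_injOn (s := Finset.univ) (fun j => (T j).edge v)
    (fun j _ => hfail j) (fun i _ j _ h => eq_of_arcDisjoint hdisj hv h)
  rw [Finset.card_univ, Fintype.card_fin] at this
  omega

variable (T σ F) in
/-- The circular-arborescence routing as a total map on states (vertex, current arborescence);
it agrees with `caStep` wherever the latter is defined. -/
noncomputable def caNext (x : V × Fin k) : V × Fin k :=
  let j := (G.nextIdx T σ F x.1 x.2).getD x.2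
  ((T j).parent x.1, j)

theorem caNext_of_nextIdx_eq_some {x : V × Fin k} {j : Fin k}
    (h : G.nextIdx T σ F x.1 x.2 = some j) : G.caNext T σ F x = ((T j).parent x.1, j) := by
  simp [caNext, h]

theorem caNext_of_notMem {x : V × Fin k} (h : (T x.2).edge x.1 ∉ F) :
    G.caNext T σ F x = ((T x.2).parent x.1, x.2) :=
  caNext_of_nextIdx_eq_some (nextIdx_eq_some_self h)

theorem caRun_eq_some_iterate (hσ : IsCircularOrder σ)
    (hdisj : ∀ i j : Fin k, i ≠ j → (T i).ArcDisjoint (T j)) (hF : F.card < k)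
    {s : V} {i₀ : Fin k} {n : ℕ} (hn : ∀ m < n, ((G.caNext T σ F)^[m] (s, i₀)).1 ≠ d) :
    G.caRun T σ F s i₀ n = some ((G.caNext T σ F)^[n] (s, i₀)) := by
  induction n with
  | zero => rfl
  | succ n ih =>
    set x := (G.caNext T σ F)^[n] (s, i₀)
    have hx : x.1 ≠ d := hn n n.lt_succ_self
    obtain ⟨j, hj⟩ := exists_nextIdx_eq_some hσ hdisj hF hx x.2
    rw [caRun, ih fun m hm => hn m (by omega), iterate_succ_apply', Option.bind_some, caStep,
      if_neg hx, hj, caNext_of_nextIdx_eq_some hj, Option.map_some]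

theorem iterate_caNext_of_forall_notMem {x : V × Fin k} {m : ℕ}
    (h : ∀ c < m, (T ((G.caNext T σ F)^[c] x).2).edge ((G.caNext T σ F)^[c] x).1 ∉ F) :
    (G.caNext T σ F)^[m] x = ((T x.2).parent^[m] x.1, x.2) := by
  induction m with
  | zero => rfl
  | succ m ih =>
    have ih := ih fun c hc => h c (by omega)
    have hm := h m m.lt_succ_self
    rw [ih] at hm
    rw [iterate_succ_apply', ih, caNext_of_notMem hm, iterate_succ_apply']

variable (T F) in
def IsBad (x : V × Fin k) : Prop :=
  x.1 ≠ d ∧ (T x.2).edge x.1 ∈ F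

theorem isBad_of_snd_caNext_ne {x : V × Fin k} (hx : x.1 ≠ d)
    (h : (G.caNext T σ F x).2 ≠ x.2) : IsBad T F x :=
  ⟨hx, by_contra fun hx' => h (by rw [caNext_of_notMem hx'])⟩

theorem card_filter_edge_eq_le_two [Fintype V]
    (hdisj : ∀ i j : Fin k, i ≠ j → (T i).ArcDisjoint (T j)) (e : E) :
    (Finset.univ.filter fun x : V × Fin k => x.1 ≠ d ∧ (T x.2).edge x.1 = e).card ≤ 2 := by
  obtain ⟨a, b, hab⟩ : ∃ a b, G.ends e = s(a, b) := Sym2.exists.1 ⟨_, rfl⟩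
  refine (Finset.card_le_card_of_injOn Prod.fst (t := {a, b}) (fun x hx => ?_)
    (fun x hx y hy hxy => ?_)).trans Finset.card_le_two
  · obtain ⟨hxd, rfl⟩ := (Finset.mem_filter.1 hx).2
    have := (T x.2).mem_ends_edge hxd
    rw [hab, Sym2.mem_iff] at this
    simpa using this
  · obtain ⟨hxd, hxe⟩ := (Finset.mem_filter.1 hx).2
    obtain ⟨-, hye⟩ := (Finset.mem_filter.1 hy).2
    have hxy : x.1 = y.1 := hxy
    exact Prod.ext hxy (eq_of_arcDisjoint hdisj hxd (by rw [hxe, hxy, hye]))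

theorem card_filter_isBad_le [Fintype V] (hdisj : ∀ i j : Fin k, i ≠ j → (T i).ArcDisjoint (T j)) :
    (Finset.univ.filter (IsBad T F)).card ≤ 2 * F.card := by
  refine Finset.card_le_mul_card_image_of_maps_to (f := fun x => (T x.2).edge x.1)
    (fun x hx => (Finset.mem_filter.1 hx).2.2) 2 fun e _ => ?_
  refine (Finset.card_le_card fun x hx => ?_).trans (card_filter_edge_eq_le_two hdisj e)
  simp only [Finset.mem_filter, Finset.mem_univ, true_and, IsBad] at hx ⊢
  exact ⟨hx.1.1, hx.2⟩

variable (T σ F) in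
/-- What the run guarantees about the first bad state `y` after the bad state `x`. -/
structure NextBad (x y : V × Fin k) : Prop where
  isBad_left : IsBad T F x
  isBad_right : IsBad T F y
  snd_ne : y.2 ≠ x.2
  snd_eq_or : y.2 = σ x.2 ∨ (T (σ x.2)).edge x.1 ∈ F
  reaches : ∃ m, 0 < m ∧ (T y.2).parent^[m] x.1 = y.1

namespace NextBad

variable {x y : V × Fin k}

theorem notMem_ends (h : NextBad T σ F x y) : x.1 ∉ G.ends ((T y.2).edge y.1) := by
  obtain ⟨m, hm, hxy⟩ := h.reaches
  rw [(T y.2).ends_eq y.1 h.isBad_right.1, Sym2.mem_iff]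
  rintro (hx | hx)
  · exact (T y.2).iterate_parent_ne_self h.isBad_left.1 hm (hxy.trans hx.symm)
  · exact (T y.2).iterate_parent_ne_self h.isBad_left.1 m.succ_pos
      (by rw [iterate_succ_apply', hxy, hx])

theorem edge_ne (h : NextBad T σ F x y) : (T x.2).edge x.1 ≠ (T y.2).edge y.1 :=
  fun he => h.notMem_ends (he ▸ (T x.2).mem_ends_edge h.isBad_left.1)

theorem two_le_card (h : NextBad T σ F x y) : 2 ≤ F.card :=
  Finset.one_lt_card.2 ⟨_, h.isBad_left.2, _, h.isBad_right.2, h.edge_ne⟩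

theorem snd_eq (hσ : IsCircularOrder σ)
    (hdisj : ∀ i j : Fin k, i ≠ j → (T i).ArcDisjoint (T j)) (hF : F.card ≤ 2)
    (h : NextBad T σ F x y) : y.2 = σ x.2 := by
  refine h.snd_eq_or.resolve_right fun hmem => ?_
  have hσx : σ x.2 ≠ x.2 := fun hfix => h.snd_ne <| by
    obtain ⟨m, hm⟩ := hσ x.2 y.2
    rwa [iterate_fixed hfix, eq_comm] at hm
  rcases Finset.eq_or_eq_of_card_le_two hF h.isBad_left.2 h.isBad_right.2 hmem h.edge_ne
    with he | he
  · exact hσx (eq_of_arcDisjoint hdisj h.isBad_left.1 he)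
  · exact h.notMem_ends (he ▸ (T (σ x.2)).mem_ends_edge h.isBad_left.1)

theorem edge_eq (hF : F.card ≤ 2) {z : V × Fin k} (hxy : NextBad T σ F x y)
    (hyz : NextBad T σ F y z) : (T z.2).edge z.1 = (T x.2).edge x.1 :=
  (Finset.eq_or_eq_of_card_le_two hF hxy.isBad_left.2 hxy.isBad_right.2 hyz.isBad_right.2
    hxy.edge_ne).resolve_right hyz.edge_ne.symm

end NextBad

theorem not_nextBad_chain [Fintype V] {T : Fin 3 → G.Arborescence d} {σ : Fin 3 → Fin 3}
    (hσ : IsCircularOrder σ) (hdisj : ∀ i j : Fin 3, i ≠ j → (T i).ArcDisjoint (T j))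
    (hF : F.card ≤ 2) {x₁ x₂ x₃ x₄ x₅ : V × Fin 3} (h₁₂ : NextBad T σ F x₁ x₂)
    (h₂₃ : NextBad T σ F x₂ x₃) (h₃₄ : NextBad T σ F x₃ x₄) (h₄₅ : NextBad T σ F x₄ x₅) :
    False := by
  have hsnd : ∀ {x y}, NextBad T σ F x y → y.2 = σ^[1] x.2 := fun h => h.snd_eq hσ hdisj hF
  have h₃ : x₃.2 = σ^[2] x₁.2 := by rw [hsnd h₂₃, hsnd h₁₂, ← iterate_add_apply]
  have h₅ : x₅.2 = σ^[4] x₁.2 := by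
    rw [hsnd h₄₅, hsnd h₃₄, h₃, ← iterate_add_apply, ← iterate_add_apply]
  have hne : ∀ {a b}, a % 3 ≠ b % 3 → σ^[a] x₁.2 ≠ σ^[b] x₁.2 :=
    fun h => mt (hσ.iterate_eq_iterate_iff _).1 h
  have he₃ : (T x₃.2).edge x₃.1 = (T x₁.2).edge x₁.1 := h₁₂.edge_eq hF h₂₃
  have he₅ : (T x₅.2).edge x₅.1 = (T x₁.2).edge x₁.1 := (h₃₄.edge_eq hF h₄₅).trans he₃
  have hmem : ∀ {x}, IsBad T F x → (T x.2).edge x.1 = (T x₁.2).edge x₁.1 →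
      x ∈ Finset.univ.filter fun x : V × Fin 3 => x.1 ≠ d ∧ (T x.2).edge x.1 = (T x₁.2).edge x₁.1 :=
    fun hx he => Finset.mem_filter.2 ⟨Finset.mem_univ _, hx.1, he⟩
  have h₁₃₅ := Finset.two_lt_card_iff.2 ⟨x₁, x₃, x₅, hmem h₁₂.isBad_left rfl,
    hmem h₂₃.isBad_right he₃, hmem h₄₅.isBad_right he₅,
    fun h => hne (a := 0) (b := 2) (by decide) ((congrArg Prod.snd h).trans h₃),
    fun h => hne (a := 0) (b := 4) (by decide) ((congrArg Prod.snd h).trans h₅),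
    fun h => hne (a := 2) (b := 4) (by decide) (h₃.symm.trans ((congrArg Prod.snd h).trans h₅))⟩
  have := card_filter_edge_eq_le_two hdisj ((T x₁.2).edge x₁.1)
  omega

theorem exists_isBad_iterate {x₀ : V × Fin k} (hnd : ∀ n, ((G.caNext T σ F)^[n] x₀).1 ≠ d)
    (a : ℕ) : ∃ b, a < b ∧ IsBad T F ((G.caNext T σ F)^[b] x₀) := by
  by_contra! hgood
  set x := (G.caNext T σ F)^[a + 1] x₀
  have hshift : ∀ c, (G.caNext T σ F)^[c] x = (G.caNext T σ F)^[c + (a + 1)] x₀ :=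
    fun c => (iterate_add_apply _ _ _ _).symm
  obtain ⟨n, hn⟩ := (T x.2).reaches_root x.1
  have hpath := iterate_caNext_of_forall_notMem (σ := σ) (x := x) (m := n) fun c _ hmem =>
    hgood (c + (a + 1)) (by omega) ⟨hnd _, by rwa [← hshift]⟩
  exact hnd (n + (a + 1)) (by rw [← hshift, hpath, hn])

theorem exists_nextBad_iterate (hσ : IsCircularOrder σ)
    (hdisj : ∀ i j : Fin k, i ≠ j → (T i).ArcDisjoint (T j)) (hF : F.card < k)
    {x₀ : V × Fin k} (hnd : ∀ n, ((G.caNext T σ F)^[n] x₀).1 ≠ d) {a : ℕ}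
    (ha : IsBad T F ((G.caNext T σ F)^[a] x₀)) :
    ∃ b, NextBad T σ F ((G.caNext T σ F)^[a] x₀) ((G.caNext T σ F)^[b] x₀) := by
  set f := G.caNext T σ F
  set x := f^[a] x₀
  have hex := exists_isBad_iterate hnd a
  obtain ⟨hab, hb⟩ := Nat.find_spec hex
  set b := Nat.find hex
  obtain ⟨j, hj⟩ := exists_nextIdx_eq_some hσ hdisj hF ha.1 x.2
  have hstart : f^[a + 1] x₀ = ((T j).parent x.1, j) := by
    rw [iterate_succ_apply']
    exact caNext_of_nextIdx_eq_some hj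
  have hshift : ∀ c, f^[c] ((T j).parent x.1, j) = f^[c + (a + 1)] x₀ := fun c => by
    rw [iterate_add_apply, hstart]
  have hfollow := iterate_caNext_of_forall_notMem (x := ((T j).parent x.1, j))
    (m := b - (a + 1)) fun c hc hmem => Nat.find_min hex (m := c + (a + 1)) (by omega)
      ⟨by omega, hnd _, by rwa [← hshift]⟩
  have hpath : f^[b] x₀ = ((T j).parent^[b - a] x.1, j) :=
    calc f^[b] x₀ = f^[b - (a + 1)] ((T j).parent x.1, j) := by
          rw [hshift, Nat.sub_add_cancel hab]
      _ = ((T j).parent^[b - (a + 1) + 1] x.1, j) := hfollow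
      _ = ((T j).parent^[b - a] x.1, j) := by rw [show b - (a + 1) + 1 = b - a by omega]
  refine ⟨b, ha, hb, ?_, ?_, b - a, by omega, ?_⟩ <;> rw [hpath]
  · exact fun h : j = x.2 => edge_notMem_of_nextIdx_eq_some hj (by rw [h]; exact ha.2)
  · exact nextIdx_eq_some_of_mem ha.2 hj

theorem exists_iterate_caNext_fst_eq [Fintype V] (hk : k = 2 ∨ k = 3) (hσ : IsCircularOrder σ)
    (hdisj : ∀ i j : Fin k, i ≠ j → (T i).ArcDisjoint (T j)) (hF : F.card ≤ k - 1)
    (x₀ : V × Fin k) : ∃ n, ((G.caNext T σ F)^[n] x₀).1 = d := by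
  by_contra! hnd
  have hFk : F.card < k := by omega
  obtain ⟨a₁, -, h₁⟩ := exists_isBad_iterate hnd 0
  obtain ⟨a₂, h₁₂⟩ := exists_nextBad_iterate hσ hdisj hFk hnd h₁
  rcases hk with rfl | rfl
  · exact absurd h₁₂.two_le_card (by omega)
  · obtain ⟨a₃, h₂₃⟩ := exists_nextBad_iterate hσ hdisj hFk hnd h₁₂.isBad_right
    obtain ⟨a₄, h₃₄⟩ := exists_nextBad_iterate hσ hdisj hFk hnd h₂₃.isBad_right
    obtain ⟨a₅, h₄₅⟩ := exists_nextBad_iterate hσ hdisj hFk hnd h₃₄.isBad_right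
    exact not_nextBad_chain hσ hdisj hF h₁₂ h₂₃ h₃₄ h₄₅

end Multigraph

theorem statement_0_general {V E : Type} [Fintype V]
    (G : Multigraph V E) (k : ℕ) (hk : k = 2 ∨ k = 3)
    (d : V)
    (T : Fin k → G.Arborescence d)
    (hdisj : ∀ i j : Fin k, i ≠ j → (T i).ArcDisjoint (T j))
    (σ : Fin k → Fin k) (hσ : IsCircularOrder σ)
    (init : V → Fin k)
    (F : Finset E) (hF : F.card ≤ k - 1)
    (s : V) :
    ∃ (n : ℕ) (p : V × Fin k),
      G.caRun T σ F s (init s) n = some p ∧ p.1 = d ∧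
      switchCount (G.caRun T σ F s (init s)) n ≤ 4 := by
  set X : ℕ → V × Fin k := fun n => (G.caNext T σ F)^[n] (s, init s)
  have hreach : ∃ n, (X n).1 = d := exists_iterate_caNext_fst_eq hk hσ hdisj hF _
  have hfirst : ∀ m < Nat.find hreach, (X m).1 ≠ d := fun m => Nat.find_min hreach
  have hFk : F.card < k := by omega
  have hrun : ∀ m ≤ Nat.find hreach, G.caRun T σ F s (init s) m = some (X m) :=
    fun m hm => caRun_eq_some_iterate hσ hdisj hFk fun c hc => hfirst c (by omega)
  refine ⟨Nat.find hreach, _, hrun _ le_rfl, Nat.find_spec hreach, ?_⟩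
  calc switchCount _ _ ≤ (Finset.univ.filter (IsBad T F)).card :=
        switchCount_le_card hrun
          (iterate_injOn_Iio_of_forall_lt (P := fun x => x.1 = d) (Nat.find_spec hreach) hfirst)
          fun m hm hsw => Finset.mem_filter.2 ⟨Finset.mem_univ _, isBad_of_snd_caNext_ne
            (hfirst m hm) (by rwa [← iterate_succ_apply' (G.caNext T σ F)])⟩
    _ ≤ 2 * F.card := card_filter_isBad_le hdisj
    _ ≤ 4 := by omega

/-- For any `k`-edge-connected multigraph with `k ∈ {2,3}` and any destination
`d`, any circular-arborescence routing is `(k-1)`-resilient, and during the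
delivery of any packet the number of switches between arborescences is at
most `4`. -/
theorem statement_0 {V E : Type} [Fintype V] [Fintype E]
    (G : Multigraph V E) (k : ℕ) (hk : k = 2 ∨ k = 3)
    (hconn : G.EdgeConnected k) (d : V)
    (T : Fin k → G.Arborescence d)
    (hdisj : ∀ i j : Fin k, i ≠ j → (T i).ArcDisjoint (T j))
    (σ : Fin k → Fin k) (hσ : IsCircularOrder σ)
    (init : V → Fin k)
    (F : Finset E) (hF : F.card ≤ k - 1)
    (s : V) (hs : G.ConnAvoiding F s d) :
    ∃ (n : ℕ) (p : V × Fin k),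
      G.caRun T σ F s (init s) n = some p ∧ p.1 = d ∧
      switchCount (G.caRun T σ F s (init s)) n ≤ 4 :=
  statement_0_general G k hk d T hdisj σ hσ init F hF s

end Srr
end

section
/- Let G be a k-edge-connected multigraph with destination vertex d, let T₁,…,T_k be k pairwise arc-disjoint d-rooted spanning arborescences of G⃗, and let F be a set of at most k−1 failed edges of G. Then at least one arborescence T_i is good with respect to F, i.e., for every failed edge {u,v} ∈ F with (u,v) ∈ T_i, the reversed arc (v,u) belongs to some arborescence T_j with j ≠ i and the unique directed path in T_j from u to d contains no failed edge. -/
open scoped Classical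

namespace Srr

section AuxProof

variable {V E : Type} [Fintype V] [Fintype E] {G : Multigraph V E} {d : V}

private lemma iterate_root (T : G.Arborescence d) : ∀ q : ℕ, T.parent^[q] d = d := by
  intro q
  induction q with
  | zero => rfl
  | succ n ih => rw [Function.iterate_succ_apply', ih, T.parent_root]

private lemma no_cycle (T : G.Arborescence d) {x : V} (hx : x ≠ d) {n : ℕ}
    (hn : n ≠ 0) (h : T.parent^[n] x = x) : False := by
  obtain ⟨N, hN⟩ := T.reaches_root x
  have hper : ∀ m : ℕ, T.parent^[n * m] x = x := by
    intro m
    induction m with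
    | zero => rfl
    | succ m ih => rw [Nat.mul_succ, Function.iterate_add_apply, h, ih]
  have hle : N ≤ n * N := by
    calc N = 1 * N := (one_mul N).symm
      _ ≤ n * N := Nat.mul_le_mul_right N (Nat.one_le_iff_ne_zero.2 hn)
  have hd : T.parent^[n * N] x = d := by
    have heq : n * N = (n * N - N) + N := by omega
    rw [heq, Function.iterate_add_apply, hN, iterate_root]
  exact hx ((hper N).symm.trans hd)

private lemma no_two_cycle (T : G.Arborescence d) {x : V} (hx : x ≠ d)
    (h : T.parent (T.parent x) = x) : False := by
  refine no_cycle T hx (n := 2) (by norm_num) ?_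
  rw [show (2 : ℕ) = 1 + 1 from rfl, Function.iterate_add_apply]
  exact h

/-- Pairing lemma: two distinct arcs with the same underlying edge are the two
reversed arcs of that edge, lying in two distinct arborescences. -/
private lemma pairing {k : ℕ} {T : Fin k → G.Arborescence d}
    (hdisj : ∀ i j : Fin k, i ≠ j → (T i).ArcDisjoint (T j))
    {i j : Fin k} {x z : V} (hx : x ≠ d) (hz : z ≠ d)
    (he : (T i).edge x = (T j).edge z) (hne : (i, x) ≠ (j, z)) :
    i ≠ j ∧ (T i).parent x = z ∧ (T j).parent z = x := by
  have heq : s(x, (T i).parent x) = s(z, (T j).parent z) := by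
    rw [← (T i).ends_eq x hx, ← (T j).ends_eq z hz, he]
  rw [Sym2.eq_iff] at heq
  rcases heq with ⟨h1, h2⟩ | ⟨h1, h2⟩
  · exfalso
    by_cases hij : i = j
    · exact hne (by rw [hij, h1])
    · exact hdisj i j hij x hx (by rw [he, ← h1])
  · refine ⟨?_, h2, h1.symm⟩
    rintro rfl
    exact no_two_cycle (T i) hx (by rw [h2, ← h1])

private lemma aux {k : ℕ} {T : Fin k → G.Arborescence d}
    (hdisj : ∀ i j : Fin k, i ≠ j → (T i).ArcDisjoint (T j)) :
    ∀ N : ℕ, ∀ S : Finset (Fin k), ∀ M : Finset E,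
      S.card + M.card ≤ N → M.card < S.card →
      ∃ i ∈ S, ∀ u : V, u ≠ d → (T i).edge u ∈ M →
        ∃ j ∈ S, j ≠ i ∧ (T i).parent u ≠ d ∧
          (T j).parent ((T i).parent u) = u ∧
          (T j).edge ((T i).parent u) = (T i).edge u ∧
          (T j).GoodFrom M u := by
  intro N
  induction N with
  | zero => intro S M hN hlt; omega
  | succ N ih =>
    intro S M hN hlt
    -- Case 1 : some tree of `S` has no failed arc
    by_cases h1 : ∃ i ∈ S, ∀ u : V, u ≠ d → (T i).edge u ∉ M
    · obtain ⟨i, hiS, hi⟩ := h1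
      exact ⟨i, hiS, fun u hu hm => absurd hm (hi u hu)⟩
    push_neg at h1
    have hS0 : 0 < S.card := lt_of_le_of_lt (Nat.zero_le _) hlt
    -- Case 2 : some failed edge has no arc in trees of `S`
    by_cases h2 : ∃ e0 ∈ M, ∀ i ∈ S, ∀ u : V, u ≠ d → (T i).edge u ≠ e0
    · obtain ⟨e0, he0M, hno⟩ := h2
      have hM0 : 0 < M.card := Finset.card_pos.2 ⟨e0, he0M⟩
      obtain ⟨g, hgS, hg⟩ := ih S (M.erase e0)
        (by rw [Finset.card_erase_of_mem he0M]; omega)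
        (by rw [Finset.card_erase_of_mem he0M]; omega)
      refine ⟨g, hgS, fun u hu hm => ?_⟩
      obtain ⟨j, hjS, hji, hpd, hpar, hedge, hclean⟩ :=
        hg u hu (Finset.mem_erase.2 ⟨hno g hgS u hu, hm⟩)
      exact ⟨j, hjS, hji, hpd, hpar, hedge, fun n hn hin =>
        hclean n hn (Finset.mem_erase.2 ⟨hno j hjS _ hn, hin⟩)⟩
    push_neg at h2
    -- Case 3 : some failed edge has exactly one arc in trees of `S`
    by_cases h3 : ∃ e0 ∈ M, ∃ i ∈ S, ∃ u : V, u ≠ d ∧ (T i).edge u = e0 ∧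
        ∀ j ∈ S, ∀ z : V, z ≠ d → (T j).edge z = e0 → j = i ∧ z = u
    · obtain ⟨e0, he0M, i, hiS, u, hud, heu, huniq⟩ := h3
      have hM0 : 0 < M.card := Finset.card_pos.2 ⟨e0, he0M⟩
      obtain ⟨g, hgS', hg⟩ := ih (S.erase i) (M.erase e0)
        (by rw [Finset.card_erase_of_mem he0M, Finset.card_erase_of_mem hiS]; omega)
        (by rw [Finset.card_erase_of_mem he0M, Finset.card_erase_of_mem hiS]; omega)
      obtain ⟨hgi, hgS⟩ := Finset.mem_erase.1 hgS'
      refine ⟨g, hgS, fun w hw hm => ?_⟩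
      have hne : (T g).edge w ≠ e0 := fun hh => hgi (huniq g hgS w hw hh).1
      obtain ⟨j, hjS', hji, hpd, hpar, hedge, hclean⟩ :=
        hg w hw (Finset.mem_erase.2 ⟨hne, hm⟩)
      obtain ⟨hjne, hjS⟩ := Finset.mem_erase.1 hjS'
      refine ⟨j, hjS, hji, hpd, hpar, hedge, fun n hn hin => ?_⟩
      exact hclean n hn (Finset.mem_erase.2
        ⟨fun hh => hjne (huniq j hjS _ hn hh).1, hin⟩)
    push_neg at h3
    -- Now every failed edge has exactly two (reversed) arcs in trees of `S`
    have htrees : ∀ e0 ∈ M,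
        (S.filter fun i => ∃ u : V, u ≠ d ∧ (T i).edge u = e0).card = 2 := by
      intro e0 he0M
      obtain ⟨i, hiS, u, hud, heu⟩ := h2 e0 he0M
      obtain ⟨j, hjS, z, hzd, hez, hnejz⟩ := h3 e0 he0M i hiS u hud heu
      have hne' : (j, z) ≠ (i, u) := fun hh =>
        hnejz (congrArg Prod.fst hh) (congrArg Prod.snd hh)
      obtain ⟨hji, hpz, hpu⟩ := pairing hdisj hzd hud (hez.trans heu.symm) hne'
      have hset : (S.filter fun m => ∃ w : V, w ≠ d ∧ (T m).edge w = e0) = {i, j} := by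
        ext m
        simp only [Finset.mem_filter, Finset.mem_insert, Finset.mem_singleton]
        constructor
        · rintro ⟨hmS, w, hwd, hew⟩
          by_cases hmi : (m, w) = (i, u)
          · exact Or.inl (congrArg Prod.fst hmi)
          · obtain ⟨hmne, hpw, hpu'⟩ := pairing hdisj hwd hud (hew.trans heu.symm) hmi
            have hwz : w = z := hpu'.symm.trans hpu
            right
            by_contra hmj
            have h5 : (T m).edge z = e0 := by rw [← hwz]; exact hew
            exact hdisj m j hmj z hzd (h5.trans hez.symm)
        · rintro (rfl | rfl)
          · exact ⟨hiS, u, hud, heu⟩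
          · exact ⟨hjS, z, hzd, hez⟩
      rw [hset, Finset.card_insert_of_notMem (by simpa using hji.symm),
        Finset.card_singleton]
    have hsum : ∑ i ∈ S, (M.filter fun e0 => ∃ u : V, u ≠ d ∧ (T i).edge u = e0).card
        = 2 * M.card := by
      calc ∑ i ∈ S, (M.filter fun e0 => ∃ u : V, u ≠ d ∧ (T i).edge u = e0).card
          = ∑ i ∈ S, ∑ e0 ∈ M, if ∃ u : V, u ≠ d ∧ (T i).edge u = e0 then 1 else 0 :=
            Finset.sum_congr rfl fun i _ => Finset.card_filter _ _
        _ = ∑ e0 ∈ M, ∑ i ∈ S, if ∃ u : V, u ≠ d ∧ (T i).edge u = e0 then 1 else 0 :=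
            Finset.sum_comm
        _ = ∑ e0 ∈ M, (S.filter fun i => ∃ u : V, u ≠ d ∧ (T i).edge u = e0).card :=
            Finset.sum_congr rfl fun e0 _ => (Finset.card_filter _ _).symm
        _ = ∑ _e0 ∈ M, 2 := Finset.sum_congr rfl htrees
        _ = 2 * M.card := by rw [Finset.sum_const, smul_eq_mul, mul_comm]
    -- there is a leaf tree
    obtain ⟨l, hlS, hdegl⟩ : ∃ l ∈ S,
        (M.filter fun e0 => ∃ u : V, u ≠ d ∧ (T l).edge u = e0).card ≤ 1 := by
      by_contra hco
      push_neg at hco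
      have h6 : 2 * S.card ≤ ∑ i ∈ S,
          (M.filter fun e0 => ∃ u : V, u ≠ d ∧ (T i).edge u = e0).card := by
        calc 2 * S.card = ∑ _i ∈ S, 2 := by rw [Finset.sum_const, smul_eq_mul, mul_comm]
          _ ≤ _ := Finset.sum_le_sum fun i hi => hco i hi
      rw [hsum] at h6
      omega
    obtain ⟨y, hyd, hyM⟩ := h1 l hlS
    -- the unique failed arc of the leaf tree
    have huy : ∀ w : V, w ≠ d → (T l).edge w ∈ M → w = y := by
      intro w hwd hwM
      by_contra hwy
      have hmem1 : (T l).edge w ∈ M.filter fun e0 => ∃ u : V, u ≠ d ∧ (T l).edge u = e0 :=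
        Finset.mem_filter.2 ⟨hwM, w, hwd, rfl⟩
      have hmem2 : (T l).edge y ∈ M.filter fun e0 => ∃ u : V, u ≠ d ∧ (T l).edge u = e0 :=
        Finset.mem_filter.2 ⟨hyM, y, hyd, rfl⟩
      have heq : (T l).edge w = (T l).edge y :=
        Finset.card_le_one.1 hdegl _ hmem1 _ hmem2
      have hpair := pairing hdisj hwd hyd heq (fun hh => hwy (congrArg Prod.snd hh))
      exact hpair.1 rfl
    -- the partner arc of the leaf arc
    obtain ⟨p, hpS, x, hxd, hex, hnepx⟩ := h3 ((T l).edge y) hyM l hlS y hyd rfl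
    have hne' : (p, x) ≠ (l, y) := fun hh =>
      hnepx (congrArg Prod.fst hh) (congrArg Prod.snd hh)
    obtain ⟨hpl, hppx, hply⟩ := pairing hdisj hxd hyd hex hne'
    -- all arcs of the leaf edge
    have harce : ∀ m w, w ≠ d → (T m).edge w = (T l).edge y →
        (m = l ∧ w = y) ∨ (m = p ∧ w = x) := by
      intro m w hwd hew
      by_cases hml : (m, w) = (l, y)
      · exact Or.inl ⟨congrArg Prod.fst hml, congrArg Prod.snd hml⟩
      obtain ⟨hmnl, hpw, hply'⟩ := pairing hdisj hwd hyd hew hml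
      have hwx : w = x := hply'.symm.trans hply
      right
      refine ⟨?_, hwx⟩
      by_contra hmp
      have h5 : (T m).edge x = (T l).edge y := by rw [← hwx]; exact hew
      exact hdisj m p hmp x hxd (h5.trans hex.symm)
    -- the leaf tree is clean from x
    have hcleanlx : (T l).GoodFrom M x := by
      intro n hn hin
      have h5 := huy _ hn hin
      exact no_cycle (T l) hxd (n := n + 1) (Nat.succ_ne_zero n)
        (by rw [Function.iterate_succ_apply', h5, hply])
    by_cases hcpy : (T p).GoodFrom M y
    · -- the leaf tree is good
      refine ⟨l, hlS, fun w hw hm => ?_⟩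
      have hwy := huy w hw hm
      subst hwy
      refine ⟨p, hpS, hpl, ?_, ?_, ?_, hcpy⟩
      · rw [hply]; exact hxd
      · rw [hply]; exact hppx
      · rw [hply]; exact hex
    · -- recurse after removing the leaf tree and its edge
      have hM0 : 0 < M.card := Finset.card_pos.2 ⟨_, hyM⟩
      obtain ⟨g, hgS', hg⟩ := ih (S.erase l) (M.erase ((T l).edge y))
        (by rw [Finset.card_erase_of_mem hyM, Finset.card_erase_of_mem hlS]; omega)
        (by rw [Finset.card_erase_of_mem hyM, Finset.card_erase_of_mem hlS]; omega)
      obtain ⟨hgl, hgS⟩ := Finset.mem_erase.1 hgS'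
      have hncpy' : ¬ (T p).GoodFrom (M.erase ((T l).edge y)) y := by
        intro hcl
        apply hcpy
        intro n hn hin
        by_cases hE : (T p).edge ((T p).parent^[n] y) = (T l).edge y
        · rcases harce p _ hn hE with ⟨hple, _⟩ | ⟨_, hvx⟩
          · exact hpl hple
          · exact no_cycle (T p) hyd (n := n + 1) (Nat.succ_ne_zero n)
              (by rw [Function.iterate_succ_apply', hvx, hppx])
        · exact hcl n hn (Finset.mem_erase.2 ⟨hE, hin⟩)
      refine ⟨g, hgS, fun w hw hm => ?_⟩
      by_cases hE : (T g).edge w = (T l).edge y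
      · rcases harce g w hw hE with ⟨hgl', _⟩ | ⟨hgp, hwx⟩
        · exact absurd hgl' hgl
        · refine ⟨l, hlS, ?_, ?_, ?_, ?_, ?_⟩
          · rw [hgp]; exact Ne.symm hpl
          · rw [hgp, hwx, hppx]; exact hyd
          · rw [hgp, hwx, hppx]; exact hply
          · rw [hgp, hwx, hppx]; exact hex.symm
          · rw [hwx]; exact hcleanlx
      · obtain ⟨j, hjS', hji, hpd, hpar, hedge, hclean⟩ :=
          hg w hw (Finset.mem_erase.2 ⟨hE, hm⟩)
        obtain ⟨hjl, hjS⟩ := Finset.mem_erase.1 hjS'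
        refine ⟨j, hjS, hji, hpd, hpar, hedge, fun n hn hin => ?_⟩
        by_cases hE2 : (T j).edge ((T j).parent^[n] w) = (T l).edge y
        · rcases harce j _ hn hE2 with ⟨hjl', _⟩ | ⟨hjp, hvx⟩
          · exact hjl hjl'
          · apply hncpy'
            intro m hm2
            have hvx' : (T p).parent^[n] w = x := by rw [← hjp]; exact hvx
            have hclean' : (T p).GoodFrom (M.erase ((T l).edge y)) w := by
              rw [← hjp]; exact hclean
            have hsh : (T p).parent^[n + 1] w = y := by
              rw [Function.iterate_succ_apply', hvx', hppx]
            have hrw : (T p).parent^[m] y = (T p).parent^[m + (n + 1)] w := by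
              rw [Function.iterate_add_apply, hsh]
            rw [hrw] at hm2 ⊢
            exact hclean' (m + (n + 1)) hm2
        · exact hclean n hn (Finset.mem_erase.2 ⟨hE2, hin⟩)

end AuxProof

/-- Given `k` pairwise arc-disjoint `d`-rooted spanning arborescences of a
`k`-edge-connected multigraph and at most `k-1` failed edges, some
arborescence `T i` is good: for every failed edge `{u,v}` with arc `(u,v)` in
`T i`, the reversed arc `(v,u)` lies in some other arborescence `T j` and the
directed path in `T j` from `u` to `d` contains no failed edge. -/
theorem statement_16 {V E : Type} [Fintype V] [Fintype E]
    (G : Multigraph V E) (k : ℕ) (d : V)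
    (hconn : G.EdgeConnected k)
    (T : Fin k → G.Arborescence d)
    (hdisj : ∀ i j : Fin k, i ≠ j → (T i).ArcDisjoint (T j))
    (F : Finset E) (hF : F.card < k) :
    ∃ i : Fin k, ∀ u : V, u ≠ d → (T i).edge u ∈ F →
      ∃ j : Fin k, j ≠ i ∧ (T i).parent u ≠ d ∧
        (T j).parent ((T i).parent u) = u ∧
        (T j).edge ((T i).parent u) = (T i).edge u ∧
        (T j).GoodFrom F u := by
  obtain ⟨i, -, hg⟩ := aux (T := T) hdisj (Finset.univ.card + F.card) Finset.univ F
    le_rfl (by simpa using hF)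
  refine ⟨i, fun u hu hm => ?_⟩
  obtain ⟨j, -, hji, h1, h2, h3, h4⟩ := hg u hu hm
  exact ⟨j, hji, h1, h2, h3, h4⟩

end Srr
end
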